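/- If the control set of the first example is enlarged from {−1,1} to the interval [−1,1], the HJB equation for V̂₁ fails: for every x in (0,1), the supremum over a ∈ [−1,1] of (a²/2)·V̂₁''(x) − (a+2)·V̂₁(x) is strictly positive (indeed it equals (25/12)·sinh(√6·x), attained at a = 1/6, not at a = sgn(x) = 1); in particular the Markov policy π(x) = sgn(x) no longer satisfies the HJB equation sup_{a∈[−1,1]}[(a²/2)·V̂₁''(x) − (a+2)·V̂₁(x)] = 0 on (0,1). -/

import Mathlib

/-- The candidate value function of the infinite-horizon control problem with
control set `{-1, 1}`. -/
noncomputable def Vhat1 (x : ℝ) : ℝ :=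
  if 0 ≤ x then -Real.sinh (Real.sqrt 6 * x) else -Real.sqrt 3 * Real.sinh (Real.sqrt 2 * x)

/-!
On `(0, ∞)` we have `V̂₁ = -sinh (√6 ·)`, so `V̂₁'' = k V̂₁` there with `k = 6`, and the
Hamiltonian `a ↦ (a²/2)·k v - (a + 2) v` at `v = V̂₁(x) < 0` is a concave quadratic.
Completing the square, it equals `-(1 + 4k)/(2k) · v + (k v / 2)(a - 1/k)²`, so its maximum
over `[-1, 1]` is attained only at `a = 1/k = 1/6`, with value `-(25/12) v > 0`.
-/

open Real Set Filter Topology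

section ConcaveQuadratic

variable {k v : ℝ}

theorem hamiltonian_eq_max_add_sq (hk : k ≠ 0) (a : ℝ) :
    a ^ 2 / 2 * (k * v) - (a + 2) * v =
      -(1 + 4 * k) / (2 * k) * v + k * v / 2 * (a - 1 / k) ^ 2 := by
  field_simp
  ring

theorem hamiltonian_lt_max_of_ne (hkv : k * v < 0) {a : ℝ} (ha : a ≠ 1 / k) :
    a ^ 2 / 2 * (k * v) - (a + 2) * v < -(1 + 4 * k) / (2 * k) * v := by
  have hk : k ≠ 0 := by rintro rfl; simp at hkv
  have hsq : 0 < (a - 1 / k) ^ 2 := by positivity [sub_ne_zero.mpr ha]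
  rw [hamiltonian_eq_max_add_sq hk]
  nlinarith

theorem hamiltonian_inv_eq_max (hk : k ≠ 0) :
    (1 / k) ^ 2 / 2 * (k * v) - (1 / k + 2) * v = -(1 + 4 * k) / (2 * k) * v := by
  rw [hamiltonian_eq_max_add_sq hk]
  simp

theorem isGreatest_hamiltonian_Icc (hk : 1 ≤ k) (hkv : k * v < 0) :
    IsGreatest ((fun a : ℝ => a ^ 2 / 2 * (k * v) - (a + 2) * v) '' Icc (-1) 1)
      (-(1 + 4 * k) / (2 * k) * v) := by
  have hk0 : k ≠ 0 := by positivity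
  have hmem : 1 / k ∈ Icc (-1 : ℝ) 1 :=
    ⟨by linarith [one_div_pos.mpr (zero_lt_one.trans_le hk)], (div_le_one₀ (by linarith)).mpr hk⟩
  refine ⟨⟨1 / k, hmem, hamiltonian_inv_eq_max hk0⟩, ?_⟩
  rintro _ ⟨a, -, rfl⟩
  rcases eq_or_ne a (1 / k) with rfl | ha
  · exact (hamiltonian_inv_eq_max hk0).le
  · exact (hamiltonian_lt_max_of_ne hkv ha).le

end ConcaveQuadratic

theorem deriv_deriv_sinh_const_mul (c x : ℝ) :
    deriv (deriv fun y => sinh (c * y)) x = c ^ 2 * sinh (c * x) := by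
  have hd : deriv (fun y => sinh (c * y)) = fun y => c * cosh (c * y) := by
    funext y
    rw [((hasDerivAt_id' y).const_mul c).sinh.deriv]
    ring
  rw [hd, (((hasDerivAt_id' x).const_mul c).cosh.const_mul c).deriv]
  ring

theorem Vhat1_of_nonneg {x : ℝ} (hx : 0 ≤ x) : Vhat1 x = -sinh (√6 * x) := if_pos hx

theorem Vhat1_eventuallyEq_of_pos {x : ℝ} (hx : 0 < x) :
    Vhat1 =ᶠ[𝓝 x] fun y => -sinh (√6 * y) :=
  eventually_of_mem (Ioi_mem_nhds hx) fun _ hy => Vhat1_of_nonneg (le_of_lt hy)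

theorem deriv_deriv_Vhat1_of_pos {x : ℝ} (hx : 0 < x) :
    deriv (deriv Vhat1) x = 6 * Vhat1 x := by
  rw [(Vhat1_eventuallyEq_of_pos hx).deriv.deriv_eq, Vhat1_of_nonneg hx.le]
  simp only [deriv.fun_neg']
  rw [deriv_deriv_sinh_const_mul, sq_sqrt (by norm_num)]
  ring

/-- If the control set is enlarged from `{-1,1}` to `[-1,1]`, the HJB equation
for `V̂₁` fails: for every `x ∈ (0,1)` the supremum over `a ∈ [-1,1]` of
`(a²/2) V̂₁''(x) - (a+2) V̂₁(x)` is strictly positive, equal to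
`(25/12) sinh(√6 x)`, attained at `a = 1/6` and not at `a = sgn x = 1`. -/
theorem Vhat1_HJB_fails_on_interval (x : ℝ) (hx : x ∈ Set.Ioo (0 : ℝ) 1) :
    IsGreatest
      ((fun a : ℝ => a ^ 2 / 2 * deriv (deriv Vhat1) x - (a + 2) * Vhat1 x) ''
        Set.Icc (-1 : ℝ) 1) (25 / 12 * Real.sinh (Real.sqrt 6 * x)) ∧
    0 < 25 / 12 * Real.sinh (Real.sqrt 6 * x) ∧
    ((1 / 6 : ℝ) ^ 2 / 2 * deriv (deriv Vhat1) x - (1 / 6 + 2) * Vhat1 x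
      = 25 / 12 * Real.sinh (Real.sqrt 6 * x)) ∧
    ((1 : ℝ) ^ 2 / 2 * deriv (deriv Vhat1) x - (1 + 2) * Vhat1 x
      < 25 / 12 * Real.sinh (Real.sqrt 6 * x)) := by
  have hx0 : 0 < x := hx.1
  have hV : Vhat1 x = -sinh (√6 * x) := Vhat1_of_nonneg hx0.le
  have hsinh : 0 < sinh (√6 * x) := sinh_pos_iff.mpr (by positivity)
  have hkv : 6 * Vhat1 x < 0 := by rw [hV]; linarith
  have hmax : 25 / 12 * sinh (√6 * x) = -(1 + 4 * 6) / (2 * 6) * Vhat1 x := by rw [hV]; ring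
  rw [deriv_deriv_Vhat1_of_pos hx0, hmax]
  exact ⟨isGreatest_hamiltonian_Icc (by norm_num) hkv, by rw [← hmax]; positivity,
    hamiltonian_inv_eq_max (by norm_num), hamiltonian_lt_max_of_ne hkv (by norm_num)⟩
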